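/- arXiv:1203.1075 — 5 statements merged into one kernel-verified Lean document; each statement's English description precedes it below -/
import Mathlib

section
/- Let E be a field of characteristic ≠ 2 and q a nonsingular quadratic form of rank r over E. If the u-invariant of E (the supremum of dimensions of anisotropic quadratic forms over E) satisfies u(E) < 2r, then the spinor norm map SO(q)(E) → E*/E*² is surjective. -/
/-! A nondegenerate isotropic form contains a hyperbolic plane and so represents every scalar:
then `α = q(v₁) q(v₂)` with `q v₁ = α`, `q v₂ = 1`. If `q` is anisotropic, the form
`q ⊥ -α q` has dimension `2r > u(E)`, so it is isotropic; an isotropic vector `(v, w)` has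
`q v = α q w` with `q w ≠ 0`, and `α ≡ q(v) q(w)` modulo squares. -/

namespace QuadraticMap

variable {K V W : Type*} [Field K] [AddCommGroup V] [Module K V] [AddCommGroup W] [Module K W]

theorem surjective_of_not_anisotropic (Q : QuadraticMap K V K)
    (hnd : ∀ v, (∀ w, polar Q v w = 0) → v = 0) (hQ : ¬Q.Anisotropic) :
    Function.Surjective Q := by
  obtain ⟨v, hv, hQv⟩ := (not_anisotropic_iff_exists Q).mp hQ
  obtain ⟨w, hvw⟩ : ∃ w, polar Q v w ≠ 0 := by
    by_contra! h
    exact hv (hnd v h)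
  intro β
  -- `t ↦ Q (t • v + w) = Q w + t * polar Q v w` is a nonconstant affine function of `t`.
  refine ⟨((β - Q w) / polar Q v w) • v + w, ?_⟩
  rw [QuadraticMap.map_add (⇑Q), QuadraticMap.map_smul, polar_smul_left, hQv, smul_eq_mul, smul_eq_mul]
  field_simp
  ring

theorem Anisotropic.comp {Q : QuadraticMap K W K} (hQ : Q.Anisotropic) {f : V →ₗ[K] W}
    (hf : Function.Injective f) : (Q.comp f).Anisotropic := fun v hv =>
  hf (by rw [hQ (f v) hv, map_zero])

theorem not_anisotropic_of_forall_anisotropic_lt {N : ℕ}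
    (hu : ∀ (n : ℕ) (φ : QuadraticMap K (Fin n → K) K), φ.Anisotropic → n < N)
    [FiniteDimensional K V] (Q : QuadraticMap K V K) (hN : N ≤ Module.finrank K V) :
    ¬Q.Anisotropic := fun hQ =>
  (hu _ _ (hQ.comp (Module.finBasis K V).equivFun.symm.injective)).not_ge hN

theorem exists_eq_mul_of_not_anisotropic_prod {Q : QuadraticMap K V K} (hQ : Q.Anisotropic)
    {α : K} (h : ¬(Q.prod (-α • Q)).Anisotropic) : ∃ v w, Q w ≠ 0 ∧ Q v = α * Q w := by
  obtain ⟨⟨v, w⟩, hvw, hQvw⟩ := (not_anisotropic_iff_exists _).mp h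
  have hQvw : Q v = α * Q w := by
    rw [prod_apply, smul_apply, smul_eq_mul] at hQvw
    linear_combination hQvw
  refine ⟨v, w, fun hQw => hvw ?_, hQvw⟩
  rw [hQw, mul_zero] at hQvw
  rw [hQ v hQvw, hQ w hQw, Prod.mk_zero_zero]

end QuadraticMap

open QuadraticMap in
theorem spinor_norm_surjective_of_u_invariant_lt_general
    (E : Type*) [Field E]
    (V : Type*) [AddCommGroup V] [Module E V] [FiniteDimensional E V]
    (q : QuadraticForm E V)
    (hnd : ∀ v : V, (∀ w : V, QuadraticMap.polar q v w = 0) → v = 0)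
    (hu : ∀ (n : ℕ) (φ : QuadraticForm E (Fin n → E)),
      φ.Anisotropic → n < 2 * Module.finrank E V) :
    ∀ α : E, α ≠ 0 →
      ∃ l : List V, Even l.length ∧ (∀ v ∈ l, q v ≠ 0) ∧
        ∃ c : E, c ≠ 0 ∧ α = (l.map fun v => q v).prod * c ^ 2 := by
  intro α hα
  obtain ⟨v, w, hw, hv⟩ : ∃ v w, q w ≠ 0 ∧ q v = α * q w := by
    by_cases hq : q.Anisotropic
    · refine exists_eq_mul_of_not_anisotropic_prod hq
        (not_anisotropic_of_forall_anisotropic_lt hu _ ?_)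
      rw [Module.finrank_prod]
      omega
    · obtain ⟨v, hv⟩ := surjective_of_not_anisotropic q hnd hq α
      obtain ⟨w, hw⟩ := surjective_of_not_anisotropic q hnd hq 1
      exact ⟨v, w, by simp [hw], by simp [hv, hw]⟩
  refine ⟨[v, w], by simp, ?_, (q w)⁻¹, inv_ne_zero hw, ?_⟩
  · simp [hv, hα, hw]
  · simp only [List.map_cons, List.map_nil, List.prod_cons, List.prod_nil, mul_one, hv]
    field_simp

/-- **Surjectivity of the spinor norm when the u-invariant is small.**
Let `E` be a field of characteristic `≠ 2` and `q` a nonsingular quadratic form of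
rank `r` over `E` (on a finite-dimensional vector space `V` with `r = finrank E V`).
Assume `u(E) < 2r`, i.e. every anisotropic quadratic form over `E` has dimension
`< 2 * r`.  Then the spinor norm map `SO(q)(E) → E*/E*²` is surjective; concretely,
every class `α ∈ E*/E*²` is represented by a product `q(v₁) ⋯ q(v₂ₘ)` over an even
number of anisotropic vectors for `q`. -/
theorem spinor_norm_surjective_of_u_invariant_lt
    (E : Type*) [Field E] (hchar : (2 : E) ≠ 0)
    (V : Type*) [AddCommGroup V] [Module E V] [FiniteDimensional E V]
    (q : QuadraticForm E V)
    (hnd : ∀ v : V, (∀ w : V, QuadraticMap.polar q v w = 0) → v = 0)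
    (hu : ∀ (n : ℕ) (φ : QuadraticForm E (Fin n → E)),
      φ.Anisotropic → n < 2 * Module.finrank E V) :
    ∀ α : E, α ≠ 0 →
      ∃ l : List V, Even l.length ∧ (∀ v ∈ l, q v ≠ 0) ∧
        ∃ c : E, c ≠ 0 ∧ α = (l.map fun v => q v).prod * c ^ 2 :=
  spinor_norm_surjective_of_u_invariant_lt_general E V q hnd hu
end

section
/- Let E be a field of characteristic ≠ 2 with finite u-invariant u(E) = r. Let L = E(√d) be a quadratic extension, D₀ a quaternion division algebra over E with canonical involution τ₀, D = D₀ ⊗_E L with unitary involution τ = τ₀ ⊗ ι. Then for any hermitian form h₀ of rank m > r/3 over (D₀, τ₀), the extended hermitian form ρ̃(h₀) over (D, τ) is isotropic. -/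
open scoped Quaternion

/-- The unitary involution `τ = τ₀ ⊗ ι` on `D = D₀ ⊗_E L = ℍ[L, a, b]`:
quaternion conjugation combined with the nontrivial automorphism `ι = σ` of `L/E`
applied to the coefficients. -/
def quatUnitaryInv {E L : Type*} [Field E] [Field L] [Algebra E L]
    (σ : L ≃ₐ[E] L) {a b : L} (x : ℍ[L, a, b]) : ℍ[L, a, b] :=
  ⟨σ x.re, -σ x.imI, -σ x.imJ, -σ x.imK⟩

/-!
For `x ∈ D₀ = ℍ[E, a, b]` and `λ ∈ E` one has `τ₀(x) λ x = λ · nrd(x)`, so on `D₀ᵐ` the diagonal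
hermitian form `h₀ = ⟨λ₁, …, λₘ⟩` is the quadratic form `∑ λᵢ nrd(xᵢ)` of dimension `4m` over `E`.
Since `4m ≥ 3m > u(E)`, this form is isotropic, i.e. `h₀` is already isotropic over `D₀`.
As `τ` restricts to `τ₀` on `D₀ ⊆ D`, the same vector is isotropic for `ρ̃(h₀)`.
-/

open Module

theorem QuadraticForm.not_anisotropic_of_lt_finrank {K V : Type*} [Field K] [AddCommGroup V]
    [Module K V] [FiniteDimensional K V] {r : ℕ}
    (hu : ∀ (n : ℕ) (φ : QuadraticForm K (Fin n → K)), φ.Anisotropic → n ≤ r)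
    (hV : r < finrank K V) (Q : QuadraticForm K V) : ¬ Q.Anisotropic := by
  intro hQ
  let e := (finBasis K V).equivFun
  refine (hu _ (Q.comp e.symm.toLinearMap) fun v hv => ?_).not_gt hV
  simpa using hQ _ hv

namespace QuaternionAlgebra

section NormForm

variable {R : Type*} [CommRing R] (c₁ c₂ : R)

def normForm : QuadraticForm R ℍ[R,c₁,c₂] :=
  (QuadraticMap.weightedSumSquares R ![1, -c₁, -c₂, c₁ * c₂]).comp
    (linearEquivTuple c₁ 0 c₂).toLinearMap

variable {c₁ c₂}

theorem star_mul_self_eq_algebraMap_normForm (x : ℍ[R,c₁,c₂]) :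
    star x * x = algebraMap R _ (normForm c₁ c₂ x) := by
  ext <;> simp [normForm, QuadraticMap.weightedSumSquares_apply, Fin.sum_univ_four,
    algebraMap_eq] <;> ring

theorem sum_star_mul_algebraMap_mul {ι : Type*} [Fintype ι] (lam : ι → R)
    (x : ι → ℍ[R,c₁,c₂]) :
    ∑ i, star (x i) * algebraMap R _ (lam i) * x i =
      algebraMap R _ (QuadraticMap.pi (fun i => lam i • normForm c₁ c₂) x) := by
  simp only [QuadraticMap.pi_apply, smul_apply, smul_eq_mul, map_sum, map_mul,
    ← star_mul_self_eq_algebraMap_normForm, ← Algebra.commutes]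
  simp only [mul_assoc]

end NormForm

theorem exists_sum_star_mul_algebraMap_mul_eq_zero {K : Type*} [Field K] {c₁ c₂ : K} {r m : ℕ}
    (hu : ∀ (n : ℕ) (φ : QuadraticForm K (Fin n → K)), φ.Anisotropic → n ≤ r)
    (hm : r < 4 * m) (lam : Fin m → K) :
    ∃ x : Fin m → ℍ[K,c₁,c₂], x ≠ 0 ∧ ∑ i, star (x i) * algebraMap K _ (lam i) * x i = 0 := by
  have hrank : r < finrank K (Fin m → ℍ[K,c₁,c₂]) := by
    rwa [finrank_pi_fintype, Finset.sum_const, finrank_eq_four, Finset.card_univ,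
      Fintype.card_fin, smul_eq_mul, mul_comm]
  have h := QuadraticForm.not_anisotropic_of_lt_finrank hu hrank
    (.pi fun i => lam i • normForm c₁ c₂)
  simp only [QuadraticMap.Anisotropic, not_forall] at h
  obtain ⟨x, hx, hx0⟩ := h
  exact ⟨x, hx0, by rw [sum_star_mul_algebraMap_mul, hx, map_zero]⟩

section BaseChange

variable {R : Type*} (A : Type*) [CommRing R] [CommRing A] [Algebra R A] {c₁ c₂ : R}

def baseChange : ℍ[R,c₁,c₂] →ₐ[R] ℍ[A, algebraMap R A c₁, algebraMap R A c₂] where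
  toFun x :=
    ⟨algebraMap R A x.re, algebraMap R A x.imI, algebraMap R A x.imJ, algebraMap R A x.imK⟩
  map_one' := by ext <;> simp
  map_mul' x y := by ext <;> simp
  map_zero' := by ext <;> simp
  map_add' x y := by ext <;> simp
  commutes' r := by ext <;> simp <;> rfl

theorem baseChange_injective (h : Function.Injective (algebraMap R A)) :
    Function.Injective (baseChange A : ℍ[R,c₁,c₂] → _) := by
  intro x y hxy
  ext <;> apply h
  exacts [congrArg re hxy, congrArg imI hxy, congrArg imJ hxy, congrArg imK hxy]

end BaseChange

end QuaternionAlgebra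

open QuaternionAlgebra

theorem quatUnitaryInv_baseChange {E L : Type*} [Field E] [Field L] [Algebra E L]
    (σ : L ≃ₐ[E] L) {a b : E} (x : ℍ[E,a,b]) :
    quatUnitaryInv σ (baseChange L x) = baseChange L (star x) := by
  ext <;> simp [quatUnitaryInv, baseChange]

theorem extended_hermitian_form_isotropic_of_u_invariant_general
    (E : Type*) [Field E]
    (r : ℕ)
    (hu₁ : ∀ (n : ℕ) (φ : QuadraticForm E (Fin n → E)), φ.Anisotropic → n ≤ r)
    (L : Type*) [Field L] [Algebra E L]
    (σ : L ≃ₐ[E] L)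
    (a b : E)
    (m : ℕ) (hm : r < 3 * m)
    (lam : Fin m → E) :
    ∃ x : Fin m → ℍ[L, algebraMap E L a, algebraMap E L b],
      x ≠ 0 ∧
      ∑ i, quatUnitaryInv σ (x i) *
          algebraMap L ℍ[L, algebraMap E L a, algebraMap E L b]
            (algebraMap E L (lam i)) * x i = 0 := by
  obtain ⟨x, hx0, hx⟩ :=
    exists_sum_star_mul_algebraMap_mul_eq_zero (c₁ := a) (c₂ := b) hu₁ (by omega) lam
  refine ⟨fun i => baseChange L (x i), fun h => hx0 (funext fun i =>
    baseChange_injective L (algebraMap E L).injective (by simpa using congrFun h i)), ?_⟩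
  have hcoe (l : E) : algebraMap L ℍ[L, algebraMap E L a, algebraMap E L b] (algebraMap E L l) =
      baseChange L (algebraMap E ℍ[E,a,b] l) := by
    ext <;> simp [baseChange, algebraMap_eq]
  simp only [quatUnitaryInv_baseChange, hcoe, ← map_mul, ← map_sum, hx, map_zero]

/-- **Isotropy of extended hermitian forms over small-u-invariant fields.**
Let `E` be a field of characteristic `≠ 2` with finite u-invariant `u(E) = r`.
Let `L = E(√d)` be a quadratic extension with nontrivial automorphism `ι`, `D₀` a
quaternion division algebra over `E` with canonical involution `τ₀`, and
`D = D₀ ⊗_E L` with the unitary involution `τ = τ₀ ⊗ ι`.  Then for any hermitian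
form `h₀ = ⟨λ₁, …, λₘ⟩` of rank `m > r/3` over `(D₀, τ₀)`, the extended hermitian
form `ρ̃(h₀)` over `(D, τ)` (the τ-sesquilinear extension of `h₀`, i.e. the same
diagonal form read over `(D, τ)`) is isotropic. -/
theorem extended_hermitian_form_isotropic_of_u_invariant
    (E : Type*) [Field E] (hchar : (2 : E) ≠ 0)
    (r : ℕ)
    (hu₁ : ∀ (n : ℕ) (φ : QuadraticForm E (Fin n → E)), φ.Anisotropic → n ≤ r)
    (hu₂ : ∃ φ : QuadraticForm E (Fin r → E), φ.Anisotropic)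
    (d : E) (hd : ∀ c : E, c ^ 2 ≠ d)
    (L : Type*) [Field L] [Algebra E L]
    (s : L) (hs : s ^ 2 = algebraMap E L d)
    (σ : L ≃ₐ[E] L) (hσs : σ s = -s) (hσinv : ∀ x : L, σ (σ x) = x)
    (hbasis : ∀ x : L, ∃! p : E × E,
      x = algebraMap E L p.1 + algebraMap E L p.2 * s)
    (a b : E)
    (hdiv : ∀ x : ℍ[E, a, b], x ≠ 0 → IsUnit x)
    (m : ℕ) (hm : r < 3 * m)
    (lam : Fin m → E) (hlam : ∀ i, lam i ≠ 0) :
    ∃ x : Fin m → ℍ[L, algebraMap E L a, algebraMap E L b],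
      x ≠ 0 ∧
      ∑ i, quatUnitaryInv σ (x i) *
          algebraMap L ℍ[L, algebraMap E L a, algebraMap E L b]
            (algebraMap E L (lam i)) * x i = 0 :=
  extended_hermitian_form_isotropic_of_u_invariant_general E r hu₁ L σ a b m hm lam
end

section
/- Let E be a field of characteristic ≠ 2, L = E(√d) a quadratic extension, D₀ a quaternion division algebra over E with canonical involution τ₀. Let π̃₁ : W(L) → W(D₀, τ₀) be the composite of the first projection π₁ : W(L) → W(E) (for the decomposition of quadratic forms over L = E ⊕ E√d) with base change W(E) → W(D₀, τ₀). Then for a + b√d ∈ L* with a, b ∈ E: if a ≠ 0 then π̃₁(⟨a + b√d⟩) = ⟨a, ad(a² − b²d)⟩ in W(D₀, τ₀), and if a = 0 ≠ b then π̃₁(⟨a + b√d⟩) = ⟨2bd, −2bd⟩ (which is hyperbolic). -/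
open scoped Quaternion

section Defs

variable (E : Type*) [Field E] (a b : E)

/-- The hermitian form over `(D₀, τ₀)` (`D₀ = ℍ[E, a, b]`, `τ₀ = star`) given by
a Gram matrix `M` with scalar entries: `h(x, y) = ∑ᵢⱼ τ₀(xᵢ) Mᵢⱼ yⱼ`. -/
def hermOfMatrix {n : ℕ} (M : Fin n → Fin n → E)
    (x y : Fin n → ℍ[E, a, b]) : ℍ[E, a, b] :=
  ∑ i, ∑ j, star (x i) * algebraMap E ℍ[E, a, b] (M i j) * y j

/-- Isometry of hermitian forms over `(D₀, τ₀)`: an `E`-linear, right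
`D₀`-linear equivalence matching the forms. -/
def HermFormIso {n₁ n₂ : ℕ}
    (h₁ : (Fin n₁ → ℍ[E, a, b]) → (Fin n₁ → ℍ[E, a, b]) → ℍ[E, a, b])
    (h₂ : (Fin n₂ → ℍ[E, a, b]) → (Fin n₂ → ℍ[E, a, b]) → ℍ[E, a, b]) : Prop :=
  ∃ g : (Fin n₁ → ℍ[E, a, b]) ≃ₗ[E] (Fin n₂ → ℍ[E, a, b]),
    (∀ (x : Fin n₁ → ℍ[E, a, b]) (u : ℍ[E, a, b]),
      g (fun i => x i * u) = fun i => g x i * u) ∧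
    (∀ x y, h₂ (g x) (g y) = h₁ x y)

end Defs

section Aux

open Matrix

variable (E : Type*) [Field E] (qa qb : E)

/-- Composition of the matrix actions of `S` and `R` on `Fin 2 → ℍ` is the
action of `S * R`; if `S * R = 1` it is the identity. -/
lemma auxCompInv (R S : Matrix (Fin 2) (Fin 2) E) (hSR : S * R = 1)
    (x : Fin 2 → ℍ[E, qa, qb]) (k : Fin 2) :
    ∑ i, S k i • ∑ j, R i j • x j = x k := by
  have h : ∑ i, S k i • ∑ j, R i j • x j = ∑ j, ((S * R) k j) • x j := by
    simp only [Finset.smul_sum, smul_smul, Matrix.mul_apply, Finset.sum_smul]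
    exact Finset.sum_comm
  rw [h, hSR]
  simp [Matrix.one_apply, ite_smul]

/-- Congruent Gram matrices (over the center) give isometric hermitian forms. -/
lemma auxHermIsoOfMat (M N R S : Matrix (Fin 2) (Fin 2) E)
    (hSR : S * R = 1) (hRS : R * S = 1)
    (hN : Rᵀ * N * R = M) :
    HermFormIso E qa qb (hermOfMatrix E qa qb (fun i j => M i j))
      (hermOfMatrix E qa qb (fun i j => N i j)) := by
  refine ⟨{ toFun := fun x k => ∑ i, R k i • x i
            invFun := fun x k => ∑ i, S k i • x i
            left_inv := fun x => funext fun k => auxCompInv E qa qb R S hSR x k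
            right_inv := fun x => funext fun k => auxCompInv E qa qb S R hRS x k
            map_add' := fun x y => funext fun k => by
              simp [Finset.sum_add_distrib, smul_add, Pi.add_apply]
            map_smul' := fun c x => funext fun k => by
              simp [Finset.smul_sum, smul_comm c] }, ?_, ?_⟩
  · intro x u
    funext k
    simp [Fin.sum_univ_two, add_mul, smul_mul_assoc]
  · intro x y
    have key : ∀ i j, ∑ k, ∑ l, R k i * (N k l * R l j) = M i j := by
      intro i j
      have h := congrFun (congrFun hN i) j
      simp only [Matrix.mul_apply, Matrix.transpose_apply, Fin.sum_univ_two] at h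
      simp only [Fin.sum_univ_two]
      linear_combination h
    have starSmul : ∀ (c : E) (z : ℍ[E, qa, qb]), star (c • z) = c • star z := by
      intro c z; ext <;> simp
    have k00 := key 0 0; have k01 := key 0 1; have k10 := key 1 0; have k11 := key 1 1
    simp only [Fin.sum_univ_two] at k00 k01 k10 k11
    simp only [hermOfMatrix, LinearEquiv.coe_mk, LinearMap.coe_mk, AddHom.coe_mk]
    simp only [Fin.sum_univ_two, star_add, star_smul, Algebra.algebraMap_eq_smul_one,
      add_mul, mul_add, smul_mul_assoc, mul_smul_comm, mul_one, starSmul]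
    linear_combination (norm := module) k00 • (star (x 0) * y 0) + k01 • (star (x 0) * y 1)
      + k10 • (star (x 1) * y 0) + k11 • (star (x 1) * y 1)

end Aux

set_option maxHeartbeats 1000000 in
/-- **Explicit computation of `π̃₁` on rank-1 hermitian forms (Suresh's exact
sequence).**  Let `E` be a field of characteristic `≠ 2`, `L = E(√d)` a quadratic
extension, and `D₀` a quaternion division algebra over `E` with canonical
involution `τ₀`.  The map `π̃₁ : W(L) → W(D₀, τ₀)` sends the rank-1 form
`⟨a + b√d⟩` of `L` to the hermitian form with Gram matrix `[[a, bd], [bd, ad]]`,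
and: if `a ≠ 0` then `π̃₁(⟨a + b√d⟩) = ⟨a, ad(a² − b²d)⟩` in `W(D₀, τ₀)`, while
if `a = 0 ≠ b` then `π̃₁(⟨a + b√d⟩) = ⟨2bd, −2bd⟩`, which is hyperbolic. -/
theorem pi1_tilde_on_rank_one_forms
    (E : Type*) [Field E] (hchar : (2 : E) ≠ 0)
    (d : E) (hd : ∀ c : E, c ^ 2 ≠ d)
    (qa qb : E) (hdiv : ∀ x : ℍ[E, qa, qb], x ≠ 0 → IsUnit x)
    (a b : E) :
    (a ≠ 0 →
      HermFormIso E qa qb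
        (hermOfMatrix E qa qb
          (fun i j => !![a, b * d; b * d, a * d] i j))
        (hermOfMatrix E qa qb
          (fun i j => !![a, 0; 0, a * d * (a ^ 2 - b ^ 2 * d)] i j))) ∧
    (a = 0 → b ≠ 0 →
      HermFormIso E qa qb
        (hermOfMatrix E qa qb
          (fun i j => !![a, b * d; b * d, a * d] i j))
        (hermOfMatrix E qa qb
          (fun i j => !![2 * b * d, 0; 0, -(2 * b * d)] i j)) ∧
      HermFormIso E qa qb
        (hermOfMatrix E qa qb
          (fun i j => !![(2 : E) * b * d, 0; 0, -(2 * b * d)] i j))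
        (hermOfMatrix E qa qb (fun i j => !![(1 : E), 0; 0, -1] i j))) := by
  have hd0 : d ≠ 0 := fun h => hd 0 (by simp [h])
  constructor
  · intro ha
    refine auxHermIsoOfMat E qa qb _ _
      !![1, b * d / a; 0, 1 / a] !![1, -(b * d); 0, a] ?_ ?_ ?_ <;>
      · ext i j
        fin_cases i <;> fin_cases j <;>
          simp [Matrix.mul_apply, Matrix.transpose_apply, Matrix.vecHead, Matrix.vecTail, Fin.sum_univ_two, Matrix.one_apply] <;>
          field_simp <;> ring
  · intro ha hb
    subst ha
    have hα : (2 : E) * b * d ≠ 0 := by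
      intro h
      rcases mul_eq_zero.1 h with h' | h'
      · rcases mul_eq_zero.1 h' with h'' | h''
        · exact hchar h''
        · exact hb h''
      · exact hd0 h'
    constructor
    · refine auxHermIsoOfMat E qa qb _ _
        !![1/2, 1/2; 1/2, -(1/2)] !![1, 1; 1, -1] ?_ ?_ ?_ <;>
        · ext i j
          fin_cases i <;> fin_cases j <;>
            simp [Matrix.mul_apply, Matrix.transpose_apply, Matrix.vecHead, Matrix.vecTail, Fin.sum_univ_two, Matrix.one_apply] <;>
            field_simp <;> ring
    · refine auxHermIsoOfMat E qa qb _ _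
        !![(2 * b * d + 1) / 2, (2 * b * d - 1) / 2;
           (2 * b * d - 1) / 2, (2 * b * d + 1) / 2]
        !![(2 * b * d + 1) / (2 * (2 * b * d)), -((2 * b * d - 1) / (2 * (2 * b * d)));
           -((2 * b * d - 1) / (2 * (2 * b * d))), (2 * b * d + 1) / (2 * (2 * b * d))]
        ?_ ?_ ?_ <;>
        · ext i j
          fin_cases i <;> fin_cases j <;>
            simp [Matrix.mul_apply, Matrix.transpose_apply, Matrix.vecHead, Matrix.vecTail, Fin.sum_univ_two, Matrix.one_apply] <;>
            field_simp <;> ring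
end

section
/- Let E be a field of characteristic ≠ 2 and let q = ⟨1, a, b, abd⟩ be a rank-4 quadratic form over E with nontrivial discriminant d ∈ E*/E*². Let D = (−a, −b)_E be the quaternion algebra. Then the image of the spinor norm map of q equals Nrd(D*_{E(√d)}) ∩ E* modulo squares. -/
/-!
Each value `q(v)` is the reduced norm of `v₀ + v₁ i + v₂ j + v₃ √d k ∈ D_L`, and reduced
norms are multiplicative. Conversely, write `x ∈ D_L` as `P + Q √d` with `P, Q ∈ D`. If
`Nrd(x) ∈ E`, then `P ⊥ Q` for the norm form `n = ⟨1, a, b, ab⟩` of `D`, and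
`Nrd(x) = n(P) + d n(Q)`. When `n(Q) ≠ 0`, `n(P) n(Q) = n(P Q̄)` with `P Q̄` pure, so
`ab n(Q) Nrd(x)` is a value of `q`. Finally, every value of `n` is, up to squares, a product
of values of the subform `⟨1, a, b⟩` of `q`. Since `q(1, 0, 0, 0) = 1`, the parity of the number of factors does not matter.
-/

open scoped Quaternion

section ProdOfValues

variable {V M : Type*} [CommMonoidWithZero M]

def IsProdOfValuesModSq (f : V → M) (x : M) : Prop :=
  ∃ (l : List V) (c : M), c ≠ 0 ∧ x = (l.map f).prod * c ^ 2

namespace IsProdOfValuesModSq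

variable {f : V → M} {x y : M}

theorem value [Nontrivial M] (v : V) : IsProdOfValuesModSq f (f v) :=
  ⟨[v], 1, one_ne_zero, by simp⟩

theorem mul_sq [NoZeroDivisors M] (hx : IsProdOfValuesModSq f x) {c : M} (hc : c ≠ 0) :
    IsProdOfValuesModSq f (x * c ^ 2) := by
  obtain ⟨l, e, he, rfl⟩ := hx
  exact ⟨l, e * c, mul_ne_zero he hc, by rw [mul_pow, mul_assoc]⟩

theorem mul [NoZeroDivisors M] (hx : IsProdOfValuesModSq f x) (hy : IsProdOfValuesModSq f y) :
    IsProdOfValuesModSq f (x * y) := by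
  obtain ⟨l, c, hc, rfl⟩ := hx
  obtain ⟨l', c', hc', rfl⟩ := hy
  exact ⟨l ++ l', c * c', mul_ne_zero hc hc', by
    rw [List.map_append, List.prod_append, mul_pow, mul_mul_mul_comm]⟩

theorem of_mul_sq {G : Type*} [CommGroupWithZero G] {f : V → G} {x c : G}
    (h : IsProdOfValuesModSq f (x * c ^ 2)) (hc : c ≠ 0) : IsProdOfValuesModSq f x := by
  simpa [mul_assoc, ← mul_pow, hc] using h.mul_sq (inv_ne_zero hc)

end IsProdOfValuesModSq

theorem isProdOfValuesModSq_iff_exists_even [Nontrivial M] {f : V → M} {x : M} {v₀ : V}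
    (hv₀ : f v₀ = 1) (hx : x ≠ 0) :
    IsProdOfValuesModSq f x ↔ ∃ l : List V, Even l.length ∧ (∀ v ∈ l, f v ≠ 0) ∧
      ∃ c : M, c ≠ 0 ∧ x = (l.map f).prod * c ^ 2 := by
  refine ⟨fun ⟨l, c, hc, hxl⟩ => ?_, fun ⟨l, _, _, c, hc, hxl⟩ => ⟨l, c, hc, hxl⟩⟩
  obtain ⟨l', hl', hprod⟩ :
      ∃ l' : List V, Even l'.length ∧ (l'.map f).prod = (l.map f).prod := by
    by_cases hl : Even l.length
    · exact ⟨l, hl, rfl⟩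
    · exact ⟨v₀ :: l, by simpa [Nat.even_add_one] using hl, by simp [hv₀]⟩
  refine ⟨l', hl', fun v hv hfv => hx ?_, c, hc, hprod ▸ hxl⟩
  rw [hxl, ← hprod, List.prod_eq_zero (hfv ▸ List.mem_map_of_mem hv), zero_mul]

end ProdOfValues

section DiagForm

variable {E : Type*} [Field E] {a b : E}

/-- The form `⟨1, a, b, abd⟩`; for `d = 1` it is the reduced norm form of `(−a, −b)_E`. -/
def diagForm (a b d : E) (v : Fin 4 → E) : E :=
  v 0 ^ 2 + a * v 1 ^ 2 + b * v 2 ^ 2 + a * b * d * v 3 ^ 2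

@[simp]
theorem diagForm_vecCons (a b d x₀ x₁ x₂ x₃ : E) :
    diagForm a b d ![x₀, x₁, x₂, x₃] =
      x₀ ^ 2 + a * x₁ ^ 2 + b * x₂ ^ 2 + a * b * d * x₃ ^ 2 :=
  rfl

/-- An isotropic `⟨1, a⟩` is universal: `(x₀ (1 + t))² + a ((t - 1) y₀)² = 4 x₀² t`. -/
theorem isProdOfValuesModSq_diagForm_of_isotropic (d : E) (hchar : (2 : E) ≠ 0) {x₀ y₀ : E}
    (hx₀ : x₀ ≠ 0) (hiso : x₀ ^ 2 + a * y₀ ^ 2 = 0) (t : E) :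
    IsProdOfValuesModSq (diagForm a b d) t := by
  have key : t * (2 * x₀) ^ 2 = diagForm a b d ![x₀ * (1 + t), (t - 1) * y₀, 0, 0] := by
    rw [diagForm_vecCons]
    linear_combination -(t - 1) ^ 2 * hiso
  refine .of_mul_sq ?_ (mul_ne_zero hchar hx₀)
  rw [key]
  exact .value _

theorem isProdOfValuesModSq_diagForm_one (d : E) (hchar : (2 : E) ≠ 0) (ha : a ≠ 0)
    (hb : b ≠ 0) (p : Fin 4 → E) :
    IsProdOfValuesModSq (diagForm a b d) (diagForm a b 1 p) := by
  by_cases hP : p 0 ^ 2 + a * p 1 ^ 2 = 0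
  · by_cases hp₀ : p 0 = 0
    · have hp₁ : p 1 = 0 := by
        rw [hp₀] at hP
        simpa [ha] using hP
      have key : diagForm a b 1 p =
          diagForm a b d ![0, 0, 1, 0] * diagForm a b d ![p 2, p 3, 0, 0] := by
        rw [diagForm_vecCons, diagForm_vecCons]
        simp only [diagForm, hp₀, hp₁]
        ring
      rw [key]
      exact (IsProdOfValuesModSq.value _).mul (.value _)
    · exact isProdOfValuesModSq_diagForm_of_isotropic d hchar hp₀ hP _
  · -- two-square identity for `⟨1, a⟩`
    have key : diagForm a b 1 p * (b * (p 0 ^ 2 + a * p 1 ^ 2)) ^ 2 =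
        diagForm a b d ![p 0, p 1, 0, 0] * diagForm a b d ![0, 0, 1, 0] *
          diagForm a b d ![b * (p 0 * p 2 + a * p 1 * p 3), b * (p 0 * p 3 - p 1 * p 2),
            p 0 ^ 2 + a * p 1 ^ 2, 0] := by
      rw [diagForm_vecCons, diagForm_vecCons, diagForm_vecCons]
      unfold diagForm
      ring
    refine .of_mul_sq ?_ (mul_ne_zero hb hP)
    rw [key]
    exact ((IsProdOfValuesModSq.value _).mul (.value _)).mul (.value _)

/-- `n(P) n(Q) = n(P Q̄)`, and `P Q̄` is pure since `P ⊥ Q`; the witness is built from its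
coordinates. -/
theorem exists_diagForm_eq_of_orthogonal (d : E) {P Q : Fin 4 → E}
    (hPQ : P 0 * Q 0 + a * P 1 * Q 1 + b * P 2 * Q 2 + a * b * P 3 * Q 3 = 0) :
    ∃ w : Fin 4 → E, diagForm a b d w =
      a * b * diagForm a b 1 Q * (diagForm a b 1 P + d * diagForm a b 1 Q) := by
  refine ⟨![a * b * (P 3 * Q 0 - P 0 * Q 3 - P 1 * Q 2 + P 2 * Q 1),
    b * (P 2 * Q 0 - P 0 * Q 2 + a * P 1 * Q 3 - a * P 3 * Q 1),
    a * (P 1 * Q 0 - P 0 * Q 1 - b * P 2 * Q 3 + b * P 3 * Q 2), diagForm a b 1 Q], ?_⟩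
  rw [diagForm_vecCons]
  unfold diagForm
  linear_combination
    -(a * b * (P 0 * Q 0 + a * P 1 * Q 1 + b * P 2 * Q 2 + a * b * P 3 * Q 3)) * hPQ

theorem isProdOfValuesModSq_of_orthogonal (d : E) (hchar : (2 : E) ≠ 0) (ha : a ≠ 0)
    (hb : b ≠ 0) {P Q : Fin 4 → E}
    (hPQ : P 0 * Q 0 + a * P 1 * Q 1 + b * P 2 * Q 2 + a * b * P 3 * Q 3 = 0) :
    IsProdOfValuesModSq (diagForm a b d) (diagForm a b 1 P + d * diagForm a b 1 Q) := by
  by_cases hQ : diagForm a b 1 Q = 0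
  · rw [hQ, mul_zero, add_zero]
    exact isProdOfValuesModSq_diagForm_one d hchar ha hb P
  obtain ⟨w, hw⟩ := exists_diagForm_eq_of_orthogonal d hPQ
  have key : (diagForm a b 1 P + d * diagForm a b 1 Q) * (a * b * diagForm a b 1 Q) ^ 2 =
      diagForm a b d w * diagForm a b d ![0, 1, 0, 0] * diagForm a b d ![0, 0, 1, 0] *
        diagForm a b 1 Q := by
    rw [diagForm_vecCons, diagForm_vecCons, hw]
    ring
  refine .of_mul_sq ?_ (mul_ne_zero (mul_ne_zero ha hb) hQ)
  rw [key]
  exact (((IsProdOfValuesModSq.value _).mul (.value _)).mul (.value _)).mul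
    (isProdOfValuesModSq_diagForm_one d hchar ha hb Q)

end DiagForm

theorem QuaternionAlgebra.mul_star_eq_algebraMap {R : Type*} [CommRing R] {c₁ c₂ : R}
    (x : ℍ[R, c₁, c₂]) :
    x * star x = algebraMap R _ (x.re ^ 2 - c₁ * x.imI ^ 2 - c₂ * x.imJ ^ 2
      + c₁ * c₂ * x.imK ^ 2) := by
  have hre : (x * star x).re = x.re ^ 2 - c₁ * x.imI ^ 2 - c₂ * x.imJ ^ 2
      + c₁ * c₂ * x.imK ^ 2 := by
    rw [re_mul, re_star, imI_star, imJ_star, imK_star]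
    ring
  rw [mul_star_eq_coe, hre]
  rfl

theorem mul_star_mul_eq_algebraMap {R A : Type*} [CommSemiring R] [Semiring A] [StarMul A]
    [Algebra R A] {x y : A} {r t : R} (hx : x * star x = algebraMap R A r)
    (hy : y * star y = algebraMap R A t) :
    x * y * star (x * y) = algebraMap R A (r * t) := by
  rw [star_mul, mul_assoc, ← mul_assoc y, hy, Algebra.commutes, ← mul_assoc, hx, ← map_mul]

section QuaternionBaseChange

variable {E L : Type*} [Field E] [Field L] [Algebra E L] {a b d : E} {s : L}

theorem exists_mul_star_eq_diagForm (hs : s ^ 2 = algebraMap E L d) (v : Fin 4 → E) :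
    ∃ x : ℍ[L, algebraMap E L (-a), algebraMap E L (-b)],
      x * star x = algebraMap L _ (algebraMap E L (diagForm a b d v)) := by
  refine ⟨⟨algebraMap E L (v 0), algebraMap E L (v 1), algebraMap E L (v 2),
    s * algebraMap E L (v 3)⟩, ?_⟩
  rw [QuaternionAlgebra.mul_star_eq_algebraMap]
  congr 1
  simp only [diagForm, map_add, map_mul, map_pow, map_neg]
  linear_combination (algebraMap E L a * algebraMap E L b * algebraMap E L (v 3) ^ 2) * hs

theorem exists_mul_star_eq_prod_diagForm (hs : s ^ 2 = algebraMap E L d)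
    (l : List (Fin 4 → E)) :
    ∃ x : ℍ[L, algebraMap E L (-a), algebraMap E L (-b)],
      x * star x = algebraMap L _ (algebraMap E L (l.map (diagForm a b d)).prod) := by
  induction l with
  | nil => exact ⟨1, by simp⟩
  | cons v l ih =>
    obtain ⟨x, hx⟩ := exists_mul_star_eq_diagForm hs v
    obtain ⟨y, hy⟩ := ih
    rw [List.map_cons, List.prod_cons, map_mul]
    exact ⟨x * y, mul_star_mul_eq_algebraMap hx hy⟩

theorem exists_mul_star_eq_of_isProdOfValuesModSq (hs : s ^ 2 = algebraMap E L d) {α : E}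
    (hα : α ≠ 0) (h : IsProdOfValuesModSq (diagForm a b d) α) :
    ∃ (x : ℍ[L, algebraMap E L (-a), algebraMap E L (-b)]) (c : E), x ≠ 0 ∧ c ≠ 0 ∧
      x * star x = algebraMap L _ (algebraMap E L (α * c ^ 2)) := by
  obtain ⟨l, c, hc, hαl⟩ := h
  obtain ⟨x, hx⟩ := exists_mul_star_eq_prod_diagForm (a := a) (b := b) hs l
  have hprod : α * c⁻¹ ^ 2 = (l.map (diagForm a b d)).prod := by
    rw [hαl]
    field_simp
  refine ⟨x, c⁻¹, ?_, inv_ne_zero hc, hprod ▸ hx⟩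
  rintro rfl
  rw [zero_mul, eq_comm, map_eq_zero_iff _ QuaternionAlgebra.algebraMap_injective, map_eq_zero,
    ← hprod] at hx
  exact mul_ne_zero hα (pow_ne_zero 2 (inv_ne_zero hc)) hx

theorem eq_and_eq_zero_of_add_mul_eq
    (hbasis : ∀ x : L, ∃! p : E × E, x = algebraMap E L p.1 + algebraMap E L p.2 * s)
    {u v w : E} (h : algebraMap E L u + algebraMap E L v * s = algebraMap E L w) :
    u = w ∧ v = 0 := by
  obtain ⟨p, -, hp⟩ := hbasis (algebraMap E L w)
  exact Prod.ext_iff.mp ((hp (u, v) h.symm).trans (hp (w, 0) (by simp)).symm)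

/-- Writing `x = P + Q s` with `P, Q ∈ (−a, −b)_E`, the reduced norm of `x` is
`n(P) + d n(Q) + 2 ⟨P, Q⟩ s`. -/
theorem exists_orthogonal_of_mul_star_eq (hchar : (2 : E) ≠ 0) (hs : s ^ 2 = algebraMap E L d)
    (hbasis : ∀ x : L, ∃! p : E × E, x = algebraMap E L p.1 + algebraMap E L p.2 * s)
    (x : ℍ[L, algebraMap E L (-a), algebraMap E L (-b)]) {r : E}
    (hx : x * star x = algebraMap L _ (algebraMap E L r)) :
    ∃ P Q : Fin 4 → E, P 0 * Q 0 + a * P 1 * Q 1 + b * P 2 * Q 2 + a * b * P 3 * Q 3 = 0 ∧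
      diagForm a b 1 P + d * diagForm a b 1 Q = r := by
  have hcoord : ∀ i, ∃ u v : E,
      ![x.re, x.imI, x.imJ, x.imK] i = algebraMap E L u + algebraMap E L v * s :=
    fun i => (hbasis _).exists.elim fun p hp => ⟨p.1, p.2, hp⟩
  choose P Q hxPQ using hcoord
  refine ⟨P, Q, ?_⟩
  have hnorm := QuaternionAlgebra.algebraMap_injective
    (hx.symm.trans (QuaternionAlgebra.mul_star_eq_algebraMap x))
  have hsplit : algebraMap E L (diagForm a b 1 P + d * diagForm a b 1 Q) +
      algebraMap E L (2 * (P 0 * Q 0 + a * P 1 * Q 1 + b * P 2 * Q 2 + a * b * P 3 * Q 3)) * s =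
        algebraMap E L r := by
    rw [hnorm, show x.re = _ from hxPQ 0, show x.imI = _ from hxPQ 1,
      show x.imJ = _ from hxPQ 2, show x.imK = _ from hxPQ 3]
    simp only [diagForm, map_add, map_mul, map_pow, map_neg, map_one, map_ofNat]
    linear_combination -(algebraMap E L (Q 0) ^ 2 + algebraMap E L a * algebraMap E L (Q 1) ^ 2
      + algebraMap E L b * algebraMap E L (Q 2) ^ 2
      + algebraMap E L a * algebraMap E L b * algebraMap E L (Q 3) ^ 2) * hs
  obtain ⟨hval, hpolar⟩ := eq_and_eq_zero_of_add_mul_eq hbasis hsplit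
  exact ⟨(mul_eq_zero.mp hpolar).resolve_left hchar, hval⟩

end QuaternionBaseChange

theorem spinor_norms_rank_four_nontrivial_discriminant_general
    (E : Type*) [Field E] (hchar : (2 : E) ≠ 0)
    (a b d : E) (ha : a ≠ 0) (hb : b ≠ 0)
    (L : Type*) [Field L] [Algebra E L]
    (s : L) (hs : s ^ 2 = algebraMap E L d)
    (hbasis : ∀ x : L, ∃! p : E × E,
      x = algebraMap E L p.1 + algebraMap E L p.2 * s) :
    ∀ α : E, α ≠ 0 →
      ((∃ l : List (Fin 4 → E), Even l.length ∧
          (∀ v ∈ l, v 0 ^ 2 + a * v 1 ^ 2 + b * v 2 ^ 2 + a * b * d * v 3 ^ 2 ≠ 0) ∧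
          ∃ c : E, c ≠ 0 ∧
            α = (l.map fun v =>
              v 0 ^ 2 + a * v 1 ^ 2 + b * v 2 ^ 2 + a * b * d * v 3 ^ 2).prod
              * c ^ 2) ↔
        (∃ (x : ℍ[L, algebraMap E L (-a), algebraMap E L (-b)]) (c : E),
          x ≠ 0 ∧ c ≠ 0 ∧
          x * star x =
            algebraMap L ℍ[L, algebraMap E L (-a), algebraMap E L (-b)]
              (algebraMap E L (α * c ^ 2)))) := by
  intro α hα
  refine (isProdOfValuesModSq_iff_exists_even (f := diagForm a b d) (v₀ := ![1, 0, 0, 0])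
    (by simp) hα).symm.trans ⟨exists_mul_star_eq_of_isProdOfValuesModSq hs hα, ?_⟩
  rintro ⟨x, c, -, hc, hx⟩
  obtain ⟨P, Q, hPQ, hnorm⟩ := exists_orthogonal_of_mul_star_eq hchar hs hbasis x hx
  exact (hnorm ▸ isProdOfValuesModSq_of_orthogonal d hchar ha hb hPQ).of_mul_sq hc

/-- **Spinor norms of a rank-4 form with nontrivial discriminant (KMRT 15.11).**
Let `E` be a field of characteristic `≠ 2` and `q = ⟨1, a, b, abd⟩` a rank-4
quadratic form over `E` with nontrivial discriminant `d ∈ E*/E*²`.  Let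
`D = (−a, −b)_E` be the quaternion algebra, base-changed to the discriminant
extension `L = E(√d)`.  Then the image of the spinor norm map of `q` (the classes
of products `q(v₁)⋯q(v₂ₘ)` over even numbers of anisotropic vectors) equals
`Nrd(D*_{E(√d)}) ∩ E*` modulo squares. -/
theorem spinor_norms_rank_four_nontrivial_discriminant
    (E : Type*) [Field E] (hchar : (2 : E) ≠ 0)
    (a b d : E) (ha : a ≠ 0) (hb : b ≠ 0) (hd0 : d ≠ 0)
    (hd : ∀ c : E, c ^ 2 ≠ d)
    (L : Type*) [Field L] [Algebra E L]
    (s : L) (hs : s ^ 2 = algebraMap E L d)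
    (σ : L ≃ₐ[E] L) (hσs : σ s = -s) (hσinv : ∀ x : L, σ (σ x) = x)
    (hbasis : ∀ x : L, ∃! p : E × E,
      x = algebraMap E L p.1 + algebraMap E L p.2 * s) :
    ∀ α : E, α ≠ 0 →
      ((∃ l : List (Fin 4 → E), Even l.length ∧
          (∀ v ∈ l, v 0 ^ 2 + a * v 1 ^ 2 + b * v 2 ^ 2 + a * b * d * v 3 ^ 2 ≠ 0) ∧
          ∃ c : E, c ≠ 0 ∧
            α = (l.map fun v =>
              v 0 ^ 2 + a * v 1 ^ 2 + b * v 2 ^ 2 + a * b * d * v 3 ^ 2).prod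
              * c ^ 2) ↔
        (∃ (x : ℍ[L, algebraMap E L (-a), algebraMap E L (-b)]) (c : E),
          x ≠ 0 ∧ c ≠ 0 ∧
          x * star x =
            algebraMap L ℍ[L, algebraMap E L (-a), algebraMap E L (-b)]
              (algebraMap E L (α * c ^ 2)))) :=
  spinor_norms_rank_four_nontrivial_discriminant_general E hchar a b d ha hb L s hs hbasis
end

section
/- Let E be a field of characteristic ≠ 2 and q = ⟨1, a, b, ab⟩ a rank-4 quadratic form over E with trivial discriminant. Let D = (−a, −b)_E be the associated quaternion algebra. Then the image of the spinor norm map of q equals Nrd(D*) modulo squares: Sn(q_E) = Nrd(D*)·E*²/E*². -/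
/-!
In the basis `1, i, j, k` the form `⟨1, a, b, ab⟩` is the reduced norm of `D = (−a, −b)_E`, and
the reduced norm is multiplicative. Hence a product `q(v₁)⋯q(v₂ₘ)` is `Nrd(v₁⋯v₂ₘ)`, and
conversely `Nrd(x) = q(x) q(1)` is a product of an even number of values of `q`.
-/

open scoped Quaternion

namespace QuaternionAlgebra

variable {R : Type*} [CommRing R] {c₁ c₂ c₃ : R}

def reducedNorm : ℍ[R,c₁,c₂,c₃] →*₀ R where
  toFun x := (x * star x).re
  map_zero' := by simp only [star_zero, zero_mul, re_zero]
  map_one' := by simp only [star_one, one_mul, re_one]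
  -- `y * star y` is a scalar, so it commutes past `x`.
  map_mul' x y := coe_injective <| by
    conv_lhs => rw [← mul_star_eq_coe, star_mul, mul_assoc, ← mul_assoc y, y.mul_star_eq_coe,
      coe_commutes, ← mul_assoc, x.mul_star_eq_coe, ← coe_mul]

theorem reducedNorm_apply (x : ℍ[R,c₁,c₂,c₃]) : reducedNorm x = (x * star x).re := rfl

theorem reducedNorm_equivTuple_symm (a b : R) (v : Fin 4 → R) :
    reducedNorm ((equivTuple (-a) 0 (-b)).symm v) =
      v 0 ^ 2 + a * v 1 ^ 2 + b * v 2 ^ 2 + a * b * v 3 ^ 2 := by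
  simp only [reducedNorm_apply, equivTuple_symm_apply, re_mul, re_star, imI_star, imJ_star,
    imK_star]
  ring

theorem list_prod_map_eq_reducedNorm_list_prod (a b : R) (l : List (Fin 4 → R)) :
    (l.map fun v => v 0 ^ 2 + a * v 1 ^ 2 + b * v 2 ^ 2 + a * b * v 3 ^ 2).prod =
      reducedNorm (l.map (equivTuple (-a) 0 (-b)).symm).prod := by
  simp only [map_list_prod, List.map_map, Function.comp_def, reducedNorm_equivTuple_symm]

end QuaternionAlgebra

open QuaternionAlgebra in
theorem spinor_norms_rank_four_trivial_discriminant_general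
    (E : Type*) [Field E]
    (a b : E) :
    ∀ α : E, α ≠ 0 →
      ((∃ l : List (Fin 4 → E), Even l.length ∧
          (∀ v ∈ l, v 0 ^ 2 + a * v 1 ^ 2 + b * v 2 ^ 2 + a * b * v 3 ^ 2 ≠ 0) ∧
          ∃ c : E, c ≠ 0 ∧
            α = (l.map fun v =>
              v 0 ^ 2 + a * v 1 ^ 2 + b * v 2 ^ 2 + a * b * v 3 ^ 2).prod
              * c ^ 2) ↔
        (∃ (x : ℍ[E, -a, -b]) (c : E), x ≠ 0 ∧ c ≠ 0 ∧
          α = (x * star x).re * c ^ 2)) := by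
  intro α hα
  constructor
  · rintro ⟨l, -, -, c, hc, rfl⟩
    rw [list_prod_map_eq_reducedNorm_list_prod] at hα ⊢
    exact ⟨_, c, fun h => hα (by rw [h, map_zero, zero_mul]), hc, rfl⟩
  · rintro ⟨x, c, -, hc, rfl⟩
    have hx : reducedNorm x ≠ 0 := left_ne_zero_of_mul hα
    refine ⟨[x, 1].map (equivTuple (-a) 0 (-b)), even_two, ?_, c, hc, ?_⟩
    · simp only [List.forall_mem_map, ← reducedNorm_equivTuple_symm, Equiv.symm_apply_apply,
        List.forall_mem_cons, map_one]
      exact ⟨hx, one_ne_zero, List.forall_mem_nil _⟩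
    · rw [list_prod_map_eq_reducedNorm_list_prod, List.map_map, Equiv.symm_comp_self,
        List.map_id, List.prod_pair, mul_one, reducedNorm_apply]

/-- **Spinor norms of a rank-4 form with trivial discriminant.**
Let `E` be a field of characteristic `≠ 2` and `q = ⟨1, a, b, ab⟩` a rank-4
quadratic form over `E` with trivial discriminant.  Let `D = (−a, −b)_E` be the
associated quaternion algebra, with reduced norm `Nrd`.  Then the image of the
spinor norm map of `q` (the classes of products `q(v₁)⋯q(v₂ₘ)` over even numbers
of anisotropic vectors) equals `Nrd(D*)` modulo squares:
`Sn(q_E) = Nrd(D*)·E*²/E*²`. -/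
theorem spinor_norms_rank_four_trivial_discriminant
    (E : Type*) [Field E] (hchar : (2 : E) ≠ 0)
    (a b : E) (ha : a ≠ 0) (hb : b ≠ 0) :
    ∀ α : E, α ≠ 0 →
      ((∃ l : List (Fin 4 → E), Even l.length ∧
          (∀ v ∈ l, v 0 ^ 2 + a * v 1 ^ 2 + b * v 2 ^ 2 + a * b * v 3 ^ 2 ≠ 0) ∧
          ∃ c : E, c ≠ 0 ∧
            α = (l.map fun v =>
              v 0 ^ 2 + a * v 1 ^ 2 + b * v 2 ^ 2 + a * b * v 3 ^ 2).prod
              * c ^ 2) ↔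
        (∃ (x : ℍ[E, -a, -b]) (c : E), x ≠ 0 ∧ c ≠ 0 ∧
          α = (x * star x).re * c ^ 2)) :=
  spinor_norms_rank_four_trivial_discriminant_general E a b
end
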